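/- Let S be a K-convex monotone semigroup on X with S(t)0 ≥ 0 for all t ≥ 0, where X is additionally a topological vector space. Let P be a family of lattice seminorms on Y, and assume K is strongly right-continuous with respect to P, i.e., for every p ∈ P, every sequence (t_n) ⊂ (0,∞) with t_n → 0, and every sequence (u_n) ⊂ X converging in X to some u₀ ∈ X, one has p(K(t_n)u_n − u₀) → 0. Then S is strongly right-continuous with respect to P: for every p ∈ P and all such sequences (t_n), (u_n), one has p(S(t_n)u_n − u₀) → 0. -/

import Mathlib

open Filter Topology

/-!
K-convexity with `λ = 0` gives `S(t)u ≤ K(t)u`, and with `λ = 1/2`, together with `S(t)0 ≥ 0`,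
it gives `-K(t)(-u) ≤ S(t)u`. Hence `|S(t)u - u₀| ≤ |K(t)u - u₀| + |K(t)(-u) + u₀|`, and a lattice
seminorm of the left side is squeezed by the sum of two terms that tend to `0` by the strong
right-continuity of `K` along `(uₙ)` and along `(-uₙ)`.
-/

section Seminorm

variable {Y : Type*} [Lattice Y] [AddCommGroup Y] [AddLeftMono Y]

theorem le_add_of_le_of_neg_le {p : Y → ℝ} (hp_add : ∀ y z, p (y + z) ≤ p y + p z)
    (hp_mono : ∀ y z, |y| ≤ |z| → p y ≤ p z) {x a b : Y} (hxa : x ≤ a) (hxb : -x ≤ b) :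
    p x ≤ p a + p b := by
  have hx : |x| ≤ |(|a| + |b|)| := by
    rw [abs_of_nonneg (add_nonneg (abs_nonneg a) (abs_nonneg b))]
    exact abs_le'.2
      ⟨hxa.trans <| (le_abs_self a).trans (le_add_of_nonneg_right (abs_nonneg b)),
        hxb.trans <| (le_abs_self b).trans (le_add_of_nonneg_left (abs_nonneg a))⟩
  have hp_abs (y : Y) : p |y| ≤ p y := hp_mono _ _ (abs_abs y).le
  calc p x ≤ p (|a| + |b|) := hp_mono _ _ hx
    _ ≤ p |a| + p |b| := hp_add _ _
    _ ≤ p a + p b := add_le_add (hp_abs a) (hp_abs b)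

end Seminorm

section KConvex

variable {X Y : Type*} [AddCommGroup X] [Module ℝ X] [AddCommGroup Y] [Module ℝ Y]

def IsKConvex [LE Y] (F K : X → Y) : Prop :=
  ∀ u v : X, ∀ l : ℝ, l ∈ Set.Icc (0 : ℝ) 1 → F (l • u + (1 - l) • v) ≤ l • F u + (1 - l) • K v

theorem IsKConvex.le [Preorder Y] {F K : X → Y} (h : IsKConvex F K) (v : X) : F v ≤ K v := by
  simpa using h 0 v 0 ⟨le_rfl, zero_le_one⟩

theorem IsKConvex.neg_le [PartialOrder Y] [AddLeftMono Y] [PosSMulMono ℝ Y] {F K : X → Y}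
    (h : IsKConvex F K) (h0 : 0 ≤ F 0) (u : X) : -K (-u) ≤ F u := by
  have hmid : (2⁻¹ : ℝ) • u + (1 - 2⁻¹ : ℝ) • -u = 0 := by
    rw [smul_neg, show (1 - 2⁻¹ : ℝ) = 2⁻¹ by norm_num, add_neg_cancel]
  have hhalf : 0 ≤ (2⁻¹ : ℝ) • (F u + K (-u)) := by
    have := h u (-u) 2⁻¹ ⟨by norm_num, by norm_num⟩
    rw [hmid, show (1 - 2⁻¹ : ℝ) = 2⁻¹ by norm_num, ← smul_add] at this
    exact h0.trans this
  exact neg_le_iff_add_nonneg.2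
    ((smul_nonneg_iff_nonneg_of_pos_left (inv_pos.2 two_pos)).1 hhalf)

end KConvex

theorem strong_right_continuity_of_K_convex_general {X Y : Type*}
    [Lattice X] [AddCommGroup X] [Module ℝ X]
    [TopologicalSpace X] [IsTopologicalAddGroup X]
    [Lattice Y] [AddCommGroup Y] [Module ℝ Y]
    [CovariantClass Y Y (· + ·) (· ≤ ·)] [PosSMulMono ℝ Y]
    (ι : X →ₗ[ℝ] Y)
    (hι_order : ∀ u v : X, u ≤ v ↔ ι u ≤ ι v)
    (P : Set (Y → ℝ))
    (hP_nonneg : ∀ p ∈ P, ∀ y : Y, 0 ≤ p y)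
    (hP_add : ∀ p ∈ P, ∀ y z : Y, p (y + z) ≤ p y + p z)
    (hP_lattice : ∀ p ∈ P, ∀ y z : Y, y ⊔ (-y) ≤ z ⊔ (-z) → p y ≤ p z)
    (S : ℝ → X → X) (K : ℝ → X → Y)
    (hKconv : ∀ t : ℝ, 0 ≤ t → ∀ u v : X, ∀ l : ℝ, l ∈ Set.Icc (0 : ℝ) 1 →
      ι (S t (l • u + (1 - l) • v)) ≤ l • ι (S t u) + (1 - l) • K t v)
    (hSpos : ∀ t : ℝ, 0 ≤ t → 0 ≤ S t 0)
    (hKrc : ∀ p ∈ P, ∀ t : ℕ → ℝ, (∀ n, 0 < t n) → Tendsto t atTop (𝓝 0) →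
      ∀ (u : ℕ → X) (u₀ : X), Tendsto u atTop (𝓝 u₀) →
        Tendsto (fun n => p (K (t n) (u n) - ι u₀)) atTop (𝓝 0)) :
    ∀ p ∈ P, ∀ t : ℕ → ℝ, (∀ n, 0 < t n) → Tendsto t atTop (𝓝 0) →
      ∀ (u : ℕ → X) (u₀ : X), Tendsto u atTop (𝓝 u₀) →
        Tendsto (fun n => p (ι (S (t n) (u n)) - ι u₀)) atTop (𝓝 0) := by
  intro p hp t ht ht0 u u₀ hu
  have hconv (n : ℕ) : IsKConvex (fun v => ι (S (t n) v)) (K (t n)) := hKconv (t n) (ht n).le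
  have hpos (n : ℕ) : 0 ≤ ι (S (t n) 0) := by
    simpa using (hι_order 0 _).1 (hSpos (t n) (ht n).le)
  have hbound (n : ℕ) : p (ι (S (t n) (u n)) - ι u₀) ≤
      p (K (t n) (u n) - ι u₀) + p (K (t n) (-u n) - ι (-u₀)) := by
    refine le_add_of_le_of_neg_le (hP_add p hp) (hP_lattice p hp)
      (sub_le_sub_right ((hconv n).le _) _) ?_
    rw [neg_sub, map_neg, sub_neg_eq_add, add_comm, sub_eq_add_neg]
    exact add_le_add_right (neg_le.1 ((hconv n).neg_le (hpos n) (u n))) _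
  have hK_pos := hKrc p hp t ht ht0 u u₀ hu
  have hK_neg := hKrc p hp t ht ht0 (fun n => -u n) (-u₀) hu.neg
  exact squeeze_zero (fun n => hP_nonneg p hp _) hbound (by simpa using hK_pos.add hK_neg)

/-- Let `S` be a `K`-convex monotone semigroup on a vector sublattice
`X ⊆ Y` (encoded via a linear lattice-order embedding `ι : X →ₗ[ℝ] Y`) with `S(t)0 ≥ 0`
for all `t ≥ 0`, where `X` is a topological vector space. Let `P` be a family of lattice
seminorms on `Y` and suppose that `K` is strongly right-continuous w.r.t. `P`. Then `S`
is strongly right-continuous w.r.t. `P`. -/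
theorem strong_right_continuity_of_K_convex {X Y : Type*}
    [Lattice X] [AddCommGroup X] [Module ℝ X]
    [CovariantClass X X (· + ·) (· ≤ ·)] [PosSMulMono ℝ X]
    [TopologicalSpace X] [IsTopologicalAddGroup X] [ContinuousSMul ℝ X]
    [Lattice Y] [AddCommGroup Y] [Module ℝ Y]
    [CovariantClass Y Y (· + ·) (· ≤ ·)] [PosSMulMono ℝ Y]
    (ι : X →ₗ[ℝ] Y)
    (hι_order : ∀ u v : X, u ≤ v ↔ ι u ≤ ι v)
    (hι_sup : ∀ u v : X, ι (u ⊔ v) = ι u ⊔ ι v)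
    (P : Set (Y → ℝ))
    (hP_nonneg : ∀ p ∈ P, ∀ y : Y, 0 ≤ p y)
    (hP_add : ∀ p ∈ P, ∀ y z : Y, p (y + z) ≤ p y + p z)
    (hP_smul : ∀ p ∈ P, ∀ (r : ℝ) (y : Y), p (r • y) = |r| * p y)
    (hP_lattice : ∀ p ∈ P, ∀ y z : Y, y ⊔ (-y) ≤ z ⊔ (-z) → p y ≤ p z)
    (S : ℝ → X → X) (K : ℝ → X → Y)
    (hS0 : ∀ u : X, S 0 u = u)
    (hSsem : ∀ s t : ℝ, 0 ≤ s → 0 ≤ t → ∀ u : X, S t (S s u) = S (t + s) u)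
    (hSmono : ∀ t : ℝ, 0 ≤ t → ∀ u v : X, u ≤ v → S t u ≤ S t v)
    (hKconv : ∀ t : ℝ, 0 ≤ t → ∀ u v : X, ∀ l : ℝ, l ∈ Set.Icc (0 : ℝ) 1 →
      ι (S t (l • u + (1 - l) • v)) ≤ l • ι (S t u) + (1 - l) • K t v)
    (hSpos : ∀ t : ℝ, 0 ≤ t → 0 ≤ S t 0)
    (hKrc : ∀ p ∈ P, ∀ t : ℕ → ℝ, (∀ n, 0 < t n) → Tendsto t atTop (𝓝 0) →
      ∀ (u : ℕ → X) (u₀ : X), Tendsto u atTop (𝓝 u₀) →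
        Tendsto (fun n => p (K (t n) (u n) - ι u₀)) atTop (𝓝 0)) :
    ∀ p ∈ P, ∀ t : ℕ → ℝ, (∀ n, 0 < t n) → Tendsto t atTop (𝓝 0) →
      ∀ (u : ℕ → X) (u₀ : X), Tendsto u atTop (𝓝 u₀) →
        Tendsto (fun n => p (ι (S (t n) (u n)) - ι u₀)) atTop (𝓝 0) :=
  strong_right_continuity_of_K_convex_general ι hι_order P hP_nonneg hP_add hP_lattice S K hKconv
    hSpos hKrc
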